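/- Let W ⊊ (ℂ*)^d be a proper toric subspace (a coset of a closed connected subgroup of the torus (ℂ*)^d, given as the intersection of finitely many toric hypersurfaces {z_1^{n_{j1}} ⋯ z_d^{n_{jd}} = c_j}). Then the one-point compactification of W (i.e. the closure of W together with ∞ inside the one-point compactification of (ℂ*)^d) is contained in a compact cone neighborhood of the point {∞} in the one-point compactification of (ℂ*)^d; in particular there exists a nonempty compact set K ⊂ (ℂ*)^d of the form {z : r_i ≤ |z_i| ≤ R_i for all i} (with 0 < r_i < R_i) disjoint from W. -/

import Mathlib

/-! ### Basic topological constructions: spheres, wedges, joins, suspensions, cones, smash -/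

/-- The `n`-dimensional sphere, realized as the unit sphere in `ℝ^(n+1)`. -/
abbrev SphereT (n : ℕ) : Type := Metric.sphere (0 : EuclideanSpace ℝ (Fin (n+1))) 1

/-- A base point on the `n`-sphere. -/
noncomputable def SpherePt (n : ℕ) : SphereT n :=
  ⟨EuclideanSpace.single 0 1, by simp⟩

/-- The wedge (one-point union) of a family of pointed spaces: the quotient of the disjoint
union identifying all the base points. -/
abbrev Wedge {ι : Type*} (X : ι → Type*) [∀ i, TopologicalSpace (X i)] (pt : ∀ i, X i) : Type _ :=
  Quot (fun a b : Σ i, X i => a.2 = pt a.1 ∧ b.2 = pt b.1)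

/-- The topological join `X ∗ Y`, as the quotient of `(X × Y × I) ⊔ X ⊔ Y` identifying
`(x, y, 0) ∼ x` and `(x, y, 1) ∼ y`.  With this model `∅ ∗ Y = Y` and `X ∗ ∅ = X`. -/
abbrev Join (X Y : Type*) [TopologicalSpace X] [TopologicalSpace Y] : Type _ :=
  Quot (fun a b : (X × Y × unitInterval) ⊕ X ⊕ Y =>
    (∃ x y, a = Sum.inl (x, y, 0) ∧ b = Sum.inr (Sum.inl x)) ∨
    (∃ x y, a = Sum.inl (x, y, 1) ∧ b = Sum.inr (Sum.inr y)))

/-- The point of `X ∗ Y` coming from a point of `Y`. -/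
def JoinPtRight (X : Type*) {Y : Type*} [TopologicalSpace X] [TopologicalSpace Y] (y : Y) :
    Join X Y := Quot.mk _ (Sum.inr (Sum.inr y))

/-- The (unreduced) suspension `ΣX`, with two cone points; for well-pointed spaces it is
homotopy equivalent to the reduced suspension, and `Σ∅ = S⁰` (matching the convention
`Σ^{i} X ≃ X ∗ S^{i-1}` used for joins). -/
abbrev Susp (X : Type*) [TopologicalSpace X] : Type _ :=
  Quot (fun a b : (X × unitInterval) ⊕ Bool =>
    (∃ x, a = Sum.inl (x, 0) ∧ b = Sum.inr false) ∨
    (∃ x, a = Sum.inl (x, 1) ∧ b = Sum.inr true))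

/-- The north pole of the suspension, used as base point. -/
def SuspPt (X : Type*) [TopologicalSpace X] : Susp X := Quot.mk _ (Sum.inr true)

/-- Iterated suspension, as a bundled space. -/
noncomputable def SuspIterT : ℕ → TopCat.{0} → TopCat.{0}
  | 0, X => X
  | n+1, X => TopCat.of (Susp (SuspIterT n X))

/-- `n`-fold suspension `Σⁿ X`. -/
abbrev SuspIter (n : ℕ) (X : Type) [TopologicalSpace X] : Type :=
  SuspIterT n (TopCat.of X)

/-- Base point of an iterated suspension (for at least one suspension). -/
noncomputable def SuspIterPt (n : ℕ) (X : Type) [TopologicalSpace X] : SuspIter (n+1) X :=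
  SuspPt (SuspIterT n (TopCat.of X))

/-- The cone on `Y` with apex point; `Cone ∅` is a single point. -/
abbrev ConeT (Y : Type*) [TopologicalSpace Y] : Type _ :=
  Quot (fun a b : (Y × unitInterval) ⊕ Unit =>
    ∃ y, a = Sum.inl (y, 1) ∧ b = Sum.inr ())

/-- Apex of the cone. -/
def ConeApex (Y : Type*) [TopologicalSpace Y] : ConeT Y := Quot.mk _ (Sum.inr ())

/-- `N` is a compact cone neighborhood of `x₀`: a compact neighborhood which is a cone
with cone point `x₀`. -/
def IsCompactConeNbhd {X : Type*} [TopologicalSpace X] (N : Set X) (x₀ : X) : Prop :=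
  IsCompact N ∧ N ∈ nhds x₀ ∧
    ∃ (Y : Type) (_ : TopologicalSpace Y) (e : ConeT Y ≃ₜ ↥N),
      ((e (ConeApex Y) : ↥N) : X) = x₀

/-- The smash product `X ∧ Y` of two pointed spaces: the quotient of `X × Y`
collapsing `X ∨ Y = (X × {y₀}) ∪ ({x₀} × Y)` to a point. -/
abbrev Smash (X Y : Type*) [TopologicalSpace X] [TopologicalSpace Y] (x₀ : X) (y₀ : Y) : Type _ :=
  Quot (fun a b : X × Y => (a.1 = x₀ ∨ a.2 = y₀) ∧ (b.1 = x₀ ∨ b.2 = y₀))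

/-- A continuous map is a homotopy equivalence. -/
def IsHomotopyEquiv {X Y : Type*} [TopologicalSpace X] [TopologicalSpace Y] (f : C(X, Y)) : Prop :=
  ∃ g : C(Y, X), (g.comp f).Homotopic (ContinuousMap.id X) ∧ (f.comp g).Homotopic (ContinuousMap.id Y)

/-- A map `f : A → B` is a (Hurewicz) cofibration: it satisfies the homotopy extension
property with respect to all spaces. -/
def IsCofibration {A B : Type*} [TopologicalSpace A] [TopologicalSpace B] (f : C(A, B)) : Prop :=
  ∀ (Y : Type*) (_ : TopologicalSpace Y) (g : C(B, Y)) (H : C(A × unitInterval, Y)),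
    (∀ a, H (a, 0) = g (f a)) →
    ∃ G : C(B × unitInterval, Y), (∀ b, G (b, 0) = g b) ∧ ∀ a t, G (f a, t) = H (a, t)

/-! ### Order complexes, intersection posets and homotopy colimits over posets -/

/-- The geometric realization of the order complex of the poset `P`, restricted to chains
inside `S ⊆ P`: the space of finitely supported "barycentric coordinate" functions whose
support is a nonempty chain contained in `S`. -/
def OrderSimplices (P : Type*) [Preorder P] (S : Set P) : Set (P → ℝ) :=
  {f | (∀ p, 0 ≤ f p) ∧ (Function.support f).Finite ∧ Function.support f ⊆ S ∧
       IsChain (· ≤ ·) (Function.support f) ∧ ∑ᶠ p, f p = 1}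

/-- The intersection poset of a collection `Ps` of subsets of `X`, ordered by **reverse**
inclusion (`a ≤ b ↔ b.carrier ⊆ a.carrier`). -/
structure RevPoset {X : Type*} (Ps : Set (Set X)) : Type _ where
  carrier : Set X
  mem : carrier ∈ Ps

instance {X : Type*} {Ps : Set (Set X)} : PartialOrder (RevPoset Ps) where
  le a b := b.carrier ⊆ a.carrier
  le_refl a := subset_rfl
  le_trans a b c h1 h2 := Set.Subset.trans h2 h1
  le_antisymm a b h1 h2 := by
    cases a; cases b; simp only [RevPoset.mk.injEq]; exact Set.Subset.antisymm h2 h1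

/-- `μ` is the `0̂`-row `μ(0̂, ·)` of the Möbius function of an intersection poset with
least element `bot`: `μ(0̂,0̂) = 1` and `∑_{0̂ ≤ γ ≤ β} μ(0̂,γ) = 0` for every `β ≠ 0̂`. -/
def IsMobiusOn {X : Type*} {Ps : Set (Set X)} (bot : RevPoset Ps) (μ : RevPoset Ps → ℤ) : Prop :=
  μ bot = 1 ∧ ∀ β : RevPoset Ps, β ≠ bot → (∑ᶠ γ ∈ Set.Iic β, μ γ) = 0

/-- A diagram of topological spaces over a poset `P`, with maps pointing downwards. -/
structure PosetDiagram (P : Type*) [Preorder P] : Type _ where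
  obj : P → Type
  topo : ∀ p, TopologicalSpace (obj p)
  map : ∀ {p q : P}, q ≤ p → @ContinuousMap (obj p) (obj q) (topo p) (topo q)
  map_id : ∀ (p : P) (h : p ≤ p), map h = @ContinuousMap.id (obj p) (topo p)
  map_comp : ∀ {p q r : P} (h₁ : q ≤ p) (h₂ : r ≤ q),
    @ContinuousMap.comp (obj p) (obj q) (obj r) (topo p) (topo q) (topo r) (map h₂) (map h₁)
      = map (le_trans h₂ h₁)

attribute [instance] PosetDiagram.topo

/-- The colimit of a poset diagram: glue `x ∈ D(p)` with its images `D(p ≥ q)(x)`. -/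
abbrev PColim {P : Type*} [Preorder P] (D : PosetDiagram P) : Type _ :=
  Quot (fun a b : Σ p : P, D.obj p => ∃ h : b.1 ≤ a.1, b.2 = D.map h a.2)

/-- The homotopy colimit of a poset diagram `D`, in its standard "simplicial" model:
the disjoint union of the spaces `Δ(P_{≤p}) × D(p)` glued along the rule that a point
whose simplex coordinate is supported below `q ≤ p` is identified with its image in the
`q`-th piece. -/
abbrev Hocolim {P : Type*} [Preorder P] (D : PosetDiagram P) : Type _ :=
  Quot (fun a b : Σ p : P, ↥(OrderSimplices P (Set.Iic p)) × D.obj p =>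
    ∃ h : b.1 ≤ a.1, (a.2.1 : P → ℝ) = (b.2.1 : P → ℝ) ∧ b.2.2 = D.map h a.2.2)

/-- The canonical collapsing map from the homotopy colimit to the colimit. -/
def hocolimToColim {P : Type*} [Preorder P] (D : PosetDiagram P) : C(Hocolim D, PColim D) where
  toFun := Quot.lift (fun a => Quot.mk _ ⟨a.1, a.2.2⟩)
    (fun a b hab => by
      obtain ⟨h, -, he⟩ := hab
      exact Quot.sound ⟨h, he⟩)
  continuous_toFun := by
    apply continuous_quot_lift
    apply continuous_sigma
    intro p
    exact (continuous_quot_mk.comp (continuous_sigmaMk (σ := fun p => D.obj p))).comp continuous_snd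

/-- The diagram of spaces associated to a collection of subspaces of `X`, sending each
member to itself and each order relation to the corresponding inclusion map. -/
def inclusionDiagram {X : Type} [TopologicalSpace X] (Ps : Set (Set X)) :
    PosetDiagram (RevPoset Ps) where
  obj p := ↥p.carrier
  topo p := inferInstance
  map {p q} h := ⟨Set.inclusion h, continuous_inclusion h⟩
  map_id := by intros; rfl
  map_comp := by intros; rfl

/-! ### The complex torus and characters -/

/-- The complex torus `(ℂ*)^l`, as the subset of `ℂ^l` of points with all coordinates nonzero. -/
def TorusSet (l : ℕ) : Set (Fin l → ℂ) := {z | ∀ i, z i ≠ 0}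

/-- Evaluation of the character (Laurent monomial) with exponent vector `n` at `z`. -/
noncomputable def charEval {l : ℕ} (n : Fin l → ℤ) (z : Fin l → ℂ) : ℂ := ∏ i, z i ^ n i

/-- The union of the complex coordinate axes in `ℂ^l` (the lines where all but one
coordinate vanish). -/
def coordAxes (l : ℕ) : Set (Fin l → ℂ) := {z | ∃ j, ∀ i, i ≠ j → z i = 0}

/-! In the coordinates `log ‖zᵢ‖` a character equation `χ(z) = c` becomes an affine equation
`∑ nᵢ xᵢ = log ‖c‖`, so a proper toric subspace lies in a level set of a nonzero linear form
(or is empty) and hence misses, in log-coordinates, the unit ball about some point `p`.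
Rescaling the log-coordinates radially about `p` while keeping the arguments of the coordinates
sweeps the log-sphere of radius 1 out to infinity; this exhibits the complement of that ball,
with `∞` added, as a cone on the log-sphere with apex `∞`. The polyannulus is the log-ball of
radius `1/2`. -/

open Filter Topology Set Function Metric

theorem ContinuousLinearMap.exists_forall_le_dist_of_apply_eq {E : Type*}
    [SeminormedAddCommGroup E] [NormedSpace ℝ E] {f : E →L[ℝ] ℝ} (hf : f ≠ 0) (t r : ℝ) :
    ∃ p, ∀ x, f x = t → r ≤ dist x p := by
  obtain ⟨v, hv⟩ : ∃ v, f v ≠ 0 := by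
    by_contra! h
    exact hf (ContinuousLinearMap.ext fun v => (h v).trans rfl)
  set a := t - ‖f‖ * r - 1
  refine ⟨(a / f v) • v, fun x hx => ?_⟩
  by_contra! hlt
  have hfp : f ((a / f v) • v) = a := by rw [_root_.map_smul, smul_eq_mul, div_mul_cancel₀ _ hv]
  have hle := f.le_opNorm (x - (a / f v) • v)
  rw [map_sub, hx, hfp, Real.norm_eq_abs, ← dist_eq_norm] at hle
  nlinarith [le_abs_self (t - a), norm_nonneg f, mul_le_mul_of_nonneg_left hlt.le (norm_nonneg f)]


section TorusLog

variable {d : ℕ}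

theorem isOpen_torusSet (d : ℕ) : IsOpen (TorusSet d) := by
  simp only [TorusSet, ofPred_forall]
  exact isOpen_iInter_of_finite fun i => isOpen_ne_fun (continuous_apply i) continuous_const

instance : LocallyCompactSpace (TorusSet d) := (isOpen_torusSet d).locallyCompactSpace

noncomputable def torusLog (z : TorusSet d) : Fin d → ℝ :=
  fun i => Real.log ‖(z : Fin d → ℂ) i‖

theorem norm_pos_of_mem_torusSet (z : TorusSet d) (i : Fin d) : 0 < ‖(z : Fin d → ℂ) i‖ :=
  norm_pos_iff.2 (z.2 i)

theorem continuous_torusLog : Continuous (torusLog (d := d)) :=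
  continuous_pi fun i =>
    (continuous_norm.comp ((continuous_apply i).comp continuous_subtype_val)).log
      fun z => (norm_pos_of_mem_torusSet z i).ne'

noncomputable def torusExp (x : Fin d → ℝ) : TorusSet d :=
  ⟨fun i => (Real.exp (x i) : ℂ), fun _ => Complex.ofReal_ne_zero.2 (Real.exp_pos _).ne'⟩

theorem torusLog_torusExp (x : Fin d → ℝ) : torusLog (torusExp x) = x :=
  funext fun i => by simp [torusLog, torusExp]

theorem dist_torusLog_le_iff {z : TorusSet d} {p : Fin d → ℝ} {R : ℝ} (hR : 0 ≤ R) :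
    dist (torusLog z) p ≤ R ↔
      ∀ i, Real.exp (p i - R) ≤ ‖(z : Fin d → ℂ) i‖ ∧
        ‖(z : Fin d → ℂ) i‖ ≤ Real.exp (p i + R) := by
  refine (dist_pi_le_iff hR).trans (forall_congr' fun i => ?_)
  have hz := norm_pos_of_mem_torusSet z i
  rw [Real.dist_eq, abs_sub_le_iff, ← Real.log_le_iff_le_exp hz, ← Real.le_log_iff_exp_le hz,
    torusLog]
  constructor <;> rintro ⟨h₁, h₂⟩ <;> constructor <;> linarith

theorem isCompact_torusLog_preimage_closedBall (p : Fin d → ℝ) {R : ℝ} (hR : 0 ≤ R) :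
    IsCompact (torusLog ⁻¹' closedBall p R) := by
  have hK : IsCompact (univ.pi fun i => closedBall (0 : ℂ) (Real.exp (p i + R)) \
      ball 0 (Real.exp (p i - R))) :=
    isCompact_univ_pi fun i => (isCompact_closedBall _ _).diff isOpen_ball
  convert IsInducing.subtypeVal.isCompact_preimage' hK ?_ using 1
  · ext z
    simp [dist_torusLog_le_iff hR, and_comm]
  · intro w hw
    refine ⟨⟨w, fun i hi => ?_⟩, rfl⟩
    have := (hw i (mem_univ i)).2
    simp [hi, (Real.exp_pos _)] at this

theorem isCompact_torusLog_preimage {K : Set (Fin d → ℝ)} (hK : IsCompact K) :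
    IsCompact (torusLog ⁻¹' K) := by
  obtain ⟨R, hR, hKR⟩ := hK.isBounded.subset_closedBall_lt 0 0
  exact (isCompact_torusLog_preimage_closedBall 0 hR.le).of_isClosed_subset
    (hK.isClosed.preimage continuous_torusLog) (preimage_mono hKR)

end TorusLog

section Characters

variable {d : ℕ}

theorem charEval_zero (z : Fin d → ℂ) : charEval 0 z = 1 := by
  simp [charEval]

theorem log_norm_charEval (n : Fin d → ℤ) (z : TorusSet d) :
    Real.log ‖charEval n z‖ = ∑ i, (n i : ℝ) * torusLog z i := by
  rw [charEval, norm_prod, Real.log_prod fun i _ => ?_]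
  · simp [norm_zpow, Real.log_zpow, torusLog]
  · exact norm_zpow (z.1 i) (n i) ▸ (zpow_pos (norm_pos_of_mem_torusSet z i) _).ne'

theorem exists_forall_charEval_eq_imp_le_dist_torusLog {n : Fin d → ℤ} {c : ℂ}
    (h : {z : TorusSet d | charEval n z = c} ≠ univ) (r : ℝ) :
    ∃ p, ∀ z : TorusSet d, charEval n z = c → r ≤ dist (torusLog z) p := by
  rcases eq_or_ne n 0 with rfl | hn
  · have hc : c ≠ 1 := fun hc => h (by simp [charEval_zero, hc])
    exact ⟨0, fun z hz => absurd ((charEval_zero _).symm.trans hz) hc.symm⟩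
  let f : (Fin d → ℝ) →L[ℝ] ℝ := ∑ i, (n i : ℝ) • ContinuousLinearMap.proj i
  have hf : ∀ x, f x = ∑ i, (n i : ℝ) * x i := by simp [f]
  obtain ⟨i, hi⟩ : ∃ i, n i ≠ 0 := Function.ne_iff.1 hn
  have hf0 : f ≠ 0 := fun h0 => hi <| by
    simpa [hf, Pi.single_apply] using
      congrArg (fun g : (Fin d → ℝ) →L[ℝ] ℝ => g (Pi.single i 1)) h0
  obtain ⟨p, hp⟩ := f.exists_forall_le_dist_of_apply_eq hf0 (Real.log ‖c‖) r
  exact ⟨p, fun z hz => hp _ (by rw [hf, ← log_norm_charEval, hz])⟩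

end Characters

section LogScale

variable {d : ℕ} (p : Fin d → ℝ)

noncomputable def logScale (r : ℝ) (z : TorusSet d) : TorusSet d :=
  ⟨fun i => (z : Fin d → ℂ) i * (Real.exp ((r - 1) * (torusLog z i - p i)) : ℂ),
    fun i => mul_ne_zero (z.2 i) (Complex.ofReal_ne_zero.2 (Real.exp_pos _).ne')⟩

theorem torusLog_logScale (r : ℝ) (z : TorusSet d) :
    torusLog (logScale p r z) = AffineMap.homothety p r (torusLog z) := by
  funext i
  have hz := (norm_pos_of_mem_torusSet z i).ne'
  simp only [torusLog, logScale, norm_mul, Complex.norm_real,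
    Real.norm_of_nonneg (Real.exp_pos _).le, Real.log_mul hz (Real.exp_pos _).ne', Real.log_exp,
    AffineMap.homothety_apply, vsub_eq_sub, vadd_eq_add, Pi.add_apply, Pi.smul_apply,
    Pi.sub_apply, smul_eq_mul]
  ring

theorem dist_torusLog_logScale (r : ℝ) (z : TorusSet d) :
    dist (torusLog (logScale p r z)) p = |r| * dist (torusLog z) p := by
  rw [torusLog_logScale, dist_homothety_center, Real.norm_eq_abs, dist_comm]

theorem logScale_logScale (r s : ℝ) (z : TorusSet d) :
    logScale p s (logScale p r z) = logScale p (s * r) z := by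
  refine Subtype.ext (funext fun i => ?_)
  change (logScale p r z : Fin d → ℂ) i * _ = _
  rw [torusLog_logScale]
  simp only [logScale]
  rw [mul_assoc, ← Complex.ofReal_mul, ← Real.exp_add]
  congr 3
  simp only [AffineMap.homothety_apply, vsub_eq_sub, vadd_eq_add, Pi.add_apply, Pi.smul_apply,
    Pi.sub_apply, smul_eq_mul]
  ring

theorem logScale_one (z : TorusSet d) : logScale p 1 z = z :=
  Subtype.ext (funext fun i => by simp [logScale])

theorem logScale_injective {r : ℝ} (hr : r ≠ 0) : Injective (logScale p r) :=
  LeftInverse.injective (g := logScale p r⁻¹) fun z => by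
    rw [logScale_logScale, inv_mul_cancel₀ hr, logScale_one]

theorem continuous_logScale : Continuous (uncurry (logScale (d := d) p)) := by
  refine Continuous.subtype_mk (continuous_pi fun i => ?_) _
  have hz : Continuous fun q : ℝ × TorusSet d => (q.2 : Fin d → ℂ) i :=
    (continuous_apply i).comp (continuous_subtype_val.comp continuous_snd)
  have hlog : Continuous fun q : ℝ × TorusSet d => torusLog q.2 i :=
    (continuous_apply i).comp (continuous_torusLog.comp continuous_snd)
  fun_prop

end LogScale

theorem unitInterval.one_le_inv_one_sub {t : unitInterval} (ht : t ≠ 1) :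
    1 ≤ (1 - (t : ℝ))⁻¹ :=
  (one_le_inv₀ (sub_pos.2 (coe_lt_one.2 (unitInterval.lt_one_iff_ne_one.2 ht)))).2
    (sub_le_self _ t.2.1)

section ConeAtInfinity

open OnePoint

variable {X Z : Type*} [TopologicalSpace Z]

noncomputable def coneToOnePoint (f : ℝ → Z → X) : ConeT Z → OnePoint X :=
  Quot.lift
    (Sum.elim (fun w => if w.2 = 1 then ∞ else (f (1 - w.2)⁻¹ w.1 : OnePoint X))
      fun _ => ∞) <| by
    rintro _ _ ⟨y, rfl, rfl⟩
    simp

variable {f : ℝ → Z → X}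

theorem coneToOnePoint_mk {z : Z} {t : unitInterval} (ht : t ≠ 1) :
    coneToOnePoint f (Quot.mk _ (Sum.inl (z, t))) = f (1 - t)⁻¹ z :=
  if_neg ht

theorem coneToOnePoint_eq_infty_iff {x : ConeT Z} :
    coneToOnePoint f x = ∞ ↔ x = ConeApex Z := by
  refine ⟨fun hx => ?_, fun hx => hx ▸ rfl⟩
  induction x using Quot.ind with | mk a => ?_
  rcases a with ⟨z, t⟩ | ⟨⟩
  · by_cases ht : t = 1
    · exact Quot.sound ⟨z, ht ▸ rfl, rfl⟩
    · exact absurd ((coneToOnePoint_mk ht).symm.trans hx) (coe_ne_infty _)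
  · rfl

theorem exists_eq_mk_of_coneToOnePoint_ne_infty {x : ConeT Z} (hx : coneToOnePoint f x ≠ ∞) :
    ∃ z : Z, ∃ t : unitInterval, t ≠ 1 ∧ x = Quot.mk _ (Sum.inl (z, t)) := by
  induction x using Quot.ind with | mk a => ?_
  rcases a with ⟨z, t⟩ | ⟨⟩
  · refine ⟨z, t, fun ht => hx ?_, rfl⟩
    exact coneToOnePoint_eq_infty_iff.2 (Quot.sound ⟨z, ht ▸ rfl, rfl⟩)
  · exact absurd rfl hx

theorem tendsto_inv_one_sub_snd_atTop {w₀ : Z × unitInterval} (hw₀ : w₀.2 = 1) :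
    Tendsto (fun w : Z × unitInterval => (1 - (w.2 : ℝ))⁻¹)
      (𝓝 w₀ ⊓ 𝓟 {w | ¬w.2 = 1}) atTop := by
  refine tendsto_inv_nhdsGT_zero.comp (tendsto_nhdsWithin_iff.2 ⟨?_, ?_⟩)
  · have : Continuous fun w : Z × unitInterval => 1 - (w.2 : ℝ) := by fun_prop
    simpa [hw₀] using (this.tendsto w₀).mono_left inf_le_left
  · refine eventually_inf_principal.2 (Eventually.of_forall fun w hw => ?_)
    exact sub_pos.2 (unitInterval.coe_lt_one.2 (unitInterval.lt_one_iff_ne_one.2 hw))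

theorem continuous_coneToOnePoint [TopologicalSpace X] (hf : Continuous (uncurry f))
    (hf_tendsto : Tendsto (uncurry f) (atTop ×ˢ ⊤) (cocompact X)) :
    Continuous (coneToOnePoint f) := by
  refine continuous_quot_lift _ (continuous_sumElim.2 ⟨?_, continuous_const⟩)
  refine continuous_iff_continuousAt.2 fun w₀ => ?_
  by_cases hw₀ : w₀.2 = 1
  · show Tendsto _ _ (𝓝 (if w₀.2 = 1 then ∞ else _))
    rw [if_pos hw₀]
    refine tendsto_const_nhds.if ?_
    have h := (hf_tendsto.mono_right cocompact_le_coclosedCompact).comp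
      ((tendsto_inv_one_sub_snd_atTop hw₀).prodMk (tendsto_top (f := Prod.fst)))
    exact tendsto_coe_infty.comp h
  · have hcont : ContinuousAt (fun w : Z × unitInterval => (1 - (w.2 : ℝ))⁻¹) w₀ :=
      ((continuous_const.sub (by fun_prop)).continuousAt).inv₀
        (sub_ne_zero.2 (Ne.symm (unitInterval.coe_ne_one.2 hw₀)))
    refine ((continuous_coe.comp hf).continuousAt.comp
      (hcont.prodMk continuous_fst.continuousAt)).congr ?_
    filter_upwards [isOpen_ne.preimage continuous_snd |>.mem_nhds hw₀] with w hw
    exact (if_neg hw).symm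

theorem injective_coneToOnePoint (hf_inj : InjOn (uncurry f) (Ici 1 ×ˢ univ)) :
    Injective (coneToOnePoint f) := by
  intro x y hxy
  by_cases hx : coneToOnePoint f x = ∞
  · rw [coneToOnePoint_eq_infty_iff.1 hx, coneToOnePoint_eq_infty_iff.1 (hxy.symm.trans hx)]
  obtain ⟨z, t, ht, rfl⟩ := exists_eq_mk_of_coneToOnePoint_ne_infty hx
  obtain ⟨w, s, hs, rfl⟩ := exists_eq_mk_of_coneToOnePoint_ne_infty fun hy => hx (hxy.trans hy)
  rw [coneToOnePoint_mk ht, coneToOnePoint_mk hs, coe_eq_coe] at hxy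
  obtain ⟨hts, rfl⟩ := Prod.ext_iff.1 <| hf_inj (x₁ := ((1 - t)⁻¹, z)) (x₂ := ((1 - s)⁻¹, w))
    ⟨unitInterval.one_le_inv_one_sub ht, trivial⟩
    ⟨unitInterval.one_le_inv_one_sub hs, trivial⟩ hxy
  obtain rfl : t = s := Subtype.ext (by simpa using hts)
  rfl

theorem range_coneToOnePoint :
    range (coneToOnePoint f) = insert ∞ ((↑) '' (uncurry f '' (Ici 1 ×ˢ univ))) := by
  ext x
  constructor
  · rintro ⟨y, rfl⟩
    by_cases hy : coneToOnePoint f y = ∞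
    · exact Or.inl hy
    obtain ⟨z, t, ht, rfl⟩ := exists_eq_mk_of_coneToOnePoint_ne_infty hy
    exact Or.inr ⟨_, ⟨((1 - t)⁻¹, z), ⟨unitInterval.one_le_inv_one_sub ht, trivial⟩, rfl⟩,
      (coneToOnePoint_mk ht).symm⟩
  · rintro (rfl | ⟨_, ⟨⟨r, z⟩, ⟨hr, -⟩, rfl⟩, rfl⟩)
    · exact ⟨ConeApex Z, rfl⟩
    have hr' : r⁻¹ ∈ Ioc (0 : ℝ) 1 :=
      ⟨inv_pos.2 (zero_lt_one.trans_le hr), inv_le_one_of_one_le₀ hr⟩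
    let t : unitInterval := ⟨1 - r⁻¹, sub_nonneg.2 hr'.2, sub_le_self _ hr'.1.le⟩
    have ht : t ≠ 1 := fun h => hr'.1.ne' (by simpa [t] using congrArg Subtype.val h)
    exact ⟨Quot.mk _ (Sum.inl (z, t)), by simp [coneToOnePoint_mk ht, t]⟩

theorem isEmbedding_coneToOnePoint [TopologicalSpace X] [T2Space X] [LocallyCompactSpace X]
    [CompactSpace Z]
    (hf : Continuous (uncurry f)) (hf_tendsto : Tendsto (uncurry f) (atTop ×ˢ ⊤) (cocompact X))
    (hf_inj : InjOn (uncurry f) (Ici 1 ×ˢ univ)) : IsEmbedding (coneToOnePoint f) :=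
  ((continuous_coneToOnePoint hf hf_tendsto).isClosedEmbedding
    (injective_coneToOnePoint hf_inj)).isEmbedding

end ConeAtInfinity

section LogCone

open OnePoint

variable {d : ℕ} (p : Fin d → ℝ) (ε : ℝ)

noncomputable def logSphereScale (r : ℝ) (z : torusLog ⁻¹' sphere p ε) : TorusSet d :=
  logScale p r z

theorem dist_torusLog_logSphereScale (r : ℝ) (z : torusLog ⁻¹' sphere p ε) :
    dist (torusLog (logSphereScale p ε r z)) p = |r| * ε := by
  rw [logSphereScale, dist_torusLog_logScale, mem_sphere.1 z.2]

theorem continuous_uncurry_logSphereScale : Continuous (uncurry (logSphereScale p ε)) :=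
  (continuous_logScale p).comp (continuous_fst.prodMk (continuous_subtype_val.comp continuous_snd))

theorem tendsto_uncurry_logSphereScale (hε : 0 < ε) :
    Tendsto (uncurry (logSphereScale p ε)) (atTop ×ˢ ⊤) (cocompact (TorusSet d)) := by
  refine (tendsto_comap_iff.2 (tendsto_cocompact_of_tendsto_dist_comp_atTop p ?_)).mono_right
    (comap_cocompact_le continuous_torusLog)
  simp only [comp_apply, uncurry, dist_torusLog_logSphereScale]
  exact (tendsto_abs_atTop_atTop.comp tendsto_fst).atTop_mul_const hε

theorem injOn_uncurry_logSphereScale (hε : 0 < ε) :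
    InjOn (uncurry (logSphereScale p ε)) (Ici 1 ×ˢ univ) := by
  rintro ⟨r, z⟩ ⟨hr, -⟩ ⟨s, w⟩ ⟨hs, -⟩ h
  have hrs : r = s := by
    have := congrArg (fun x => dist (torusLog x) p) h
    simp only [uncurry, dist_torusLog_logSphereScale] at this
    rw [abs_of_nonneg (zero_le_one.trans hr), abs_of_nonneg (zero_le_one.trans hs)] at this
    exact mul_right_cancel₀ hε.ne' this
  subst hrs
  exact Prod.ext rfl (Subtype.ext (logScale_injective p (zero_lt_one.trans_le hr).ne' h))

theorem image_uncurry_logSphereScale (hε : 0 < ε) :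
    uncurry (logSphereScale p ε) '' (Ici 1 ×ˢ univ) = torusLog ⁻¹' (ball p ε)ᶜ := by
  ext x
  simp only [mem_image, mem_prod, mem_Ici, mem_univ, and_true, Prod.exists, uncurry,
    mem_preimage, mem_compl_iff, mem_ball, not_lt]
  constructor
  · rintro ⟨r, z, hr, rfl⟩
    rw [dist_torusLog_logSphereScale, abs_of_nonneg (zero_le_one.trans hr)]
    exact le_mul_of_one_le_left hε.le hr
  · intro hx
    set ρ := dist (torusLog x) p
    have hρ : 0 < ρ := hε.trans_le hx
    refine ⟨ρ / ε, ⟨logScale p (ε / ρ) x, ?_⟩, (one_le_div hε).2 hx, ?_⟩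
    · rw [mem_preimage, mem_sphere, dist_torusLog_logScale, abs_of_pos (div_pos hε hρ),
        div_mul_cancel₀ _ hρ.ne']
    · rw [logSphereScale, logScale_logScale, div_mul_div_cancel₀ hε.ne', div_self hρ.ne',
        logScale_one]

theorem isCompactConeNbhd_compl_image_torusLog_preimage_ball (hε : 0 < ε) :
    IsCompactConeNbhd ((↑) '' (torusLog ⁻¹' ball p ε) : Set (OnePoint (TorusSet d)))ᶜ ∞ := by
  have : CompactSpace (torusLog ⁻¹' sphere p ε) :=
    isCompact_iff_compactSpace.1 (isCompact_torusLog_preimage (isCompact_sphere p ε))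
  have hrange :
      range (coneToOnePoint (logSphereScale p ε)) = ((↑) '' (torusLog ⁻¹' ball p ε))ᶜ := by
    rw [range_coneToOnePoint, image_uncurry_logSphereScale p ε hε, preimage_compl,
      coe_injective.compl_image_eq, compl_range_coe, union_singleton]
  have hemb := isEmbedding_coneToOnePoint (continuous_uncurry_logSphereScale p ε)
    (tendsto_uncurry_logSphereScale p ε hε) (injOn_uncurry_logSphereScale p ε hε)
  refine ⟨hrange ▸ isCompact_range hemb.continuous, ?_,
    _, _, hemb.toHomeomorph.trans (Homeomorph.setCongr hrange), rfl⟩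
  have hopen : IsOpen ((↑) '' (torusLog ⁻¹' closedBall p ε) : Set (OnePoint (TorusSet d)))ᶜ :=
    isOpen_compl_image_coe.2 ⟨isClosed_closedBall.preimage continuous_torusLog,
      isCompact_torusLog_preimage (isCompact_closedBall p ε)⟩
  exact mem_of_superset (hopen.mem_nhds infty_notMem_image_coe)
    (compl_subset_compl.2 (image_mono (preimage_mono ball_subset_closedBall)))

end LogCone

theorem toric_subspace_contained_in_cone_neighborhood_general (d m : ℕ)
    (ch : Fin m → Fin d → ℤ) (c : Fin m → ℂ)
    (W : Set ↥(TorusSet d))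
    (hW : W = {z : ↥(TorusSet d) | ∀ j, ∏ i, ((z : Fin d → ℂ) i) ^ ch j i = c j})
    (hproper : W ≠ Set.univ) :
    (∃ N : Set (OnePoint ↥(TorusSet d)),
      IsCompactConeNbhd N OnePoint.infty ∧
      closure ((fun z : ↥(TorusSet d) => (z : OnePoint ↥(TorusSet d))) '' W) ∪
          {OnePoint.infty} ⊆ N) ∧
    (∃ r R : Fin d → ℝ, (∀ i, 0 < r i ∧ r i < R i) ∧
      {z : ↥(TorusSet d) |
        ∀ i, r i ≤ ‖(z : Fin d → ℂ) i‖ ∧ ‖(z : Fin d → ℂ) i‖ ≤ R i}.Nonempty ∧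
      Disjoint {z : ↥(TorusSet d) |
        ∀ i, r i ≤ ‖(z : Fin d → ℂ) i‖ ∧ ‖(z : Fin d → ℂ) i‖ ≤ R i} W) := by
  obtain ⟨j, hj⟩ : ∃ j, {z : TorusSet d | charEval (ch j) z = c j} ≠ univ := by
    by_contra! h
    exact hproper (hW.trans (eq_univ_of_forall fun z j => eq_univ_iff_forall.1 (h j) z))
  obtain ⟨p, hp⟩ := exists_forall_charEval_eq_imp_le_dist_torusLog hj 1
  have hWp : W ⊆ torusLog ⁻¹' (ball p 1)ᶜ := fun z hz =>
    not_lt.2 (hp z (by rw [hW] at hz; exact hz j))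
  have hN := isCompactConeNbhd_compl_image_torusLog_preimage_ball p 1 one_pos
  refine ⟨⟨_, hN, union_subset ?_ (singleton_subset_iff.2 OnePoint.infty_notMem_image_coe)⟩,
    fun i => Real.exp (p i - 1 / 2), fun i => Real.exp (p i + 1 / 2),
    fun i => ⟨Real.exp_pos _, Real.exp_lt_exp.2 (by linarith)⟩, ?_, ?_⟩
  · refine closure_minimal ((image_mono hWp).trans ?_) hN.1.isClosed
    exact preimage_compl (f := torusLog) ▸ image_compl_subset OnePoint.coe_injective
  · exact ⟨torusExp p, (dist_torusLog_le_iff (by norm_num)).1 (by simp [torusLog_torusExp])⟩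
  · refine disjoint_left.2 fun z hzK hzW => hWp hzW ?_
    exact ((dist_torusLog_le_iff (by norm_num)).2 hzK).trans_lt (by norm_num)

/-- Let `W ⊊ (ℂ*)^d` be a proper toric subspace, given as the intersection
of finitely many toric hypersurfaces `{z₁^{n_{j1}} ⋯ z_d^{n_{jd}} = c_j}`.  Then the
one-point compactification of `W` (the closure of `W` together with `∞` inside the
one-point compactification of `(ℂ*)^d`) is contained in a compact cone neighborhood of
`∞`; in particular, there is a nonempty compact "polyannulus"
`K = {z ∣ rᵢ ≤ |zᵢ| ≤ Rᵢ}` (with `0 < rᵢ < Rᵢ`) disjoint from `W`. -/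
theorem toric_subspace_contained_in_cone_neighborhood (d m : ℕ) (hd : 1 ≤ d)
    (ch : Fin m → Fin d → ℤ) (c : Fin m → ℂ) (hc : ∀ j, c j ≠ 0)
    (W : Set ↥(TorusSet d))
    (hW : W = {z : ↥(TorusSet d) | ∀ j, ∏ i, ((z : Fin d → ℂ) i) ^ ch j i = c j})
    (hproper : W ≠ Set.univ) :
    (∃ N : Set (OnePoint ↥(TorusSet d)),
      IsCompactConeNbhd N OnePoint.infty ∧
      closure ((fun z : ↥(TorusSet d) => (z : OnePoint ↥(TorusSet d))) '' W) ∪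
          {OnePoint.infty} ⊆ N) ∧
    (∃ r R : Fin d → ℝ, (∀ i, 0 < r i ∧ r i < R i) ∧
      {z : ↥(TorusSet d) |
        ∀ i, r i ≤ ‖(z : Fin d → ℂ) i‖ ∧ ‖(z : Fin d → ℂ) i‖ ≤ R i}.Nonempty ∧
      Disjoint {z : ↥(TorusSet d) |
        ∀ i, r i ≤ ‖(z : Fin d → ℂ) i‖ ∧ ‖(z : Fin d → ℂ) i‖ ≤ R i} W) :=
  toric_subspace_contained_in_cone_neighborhood_general d m ch c W hW hproper
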